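/- arXiv:1810.00895 — 4 statements merged into one kernel-verified Lean document; each statement's English description precedes it below -/
import Mathlib

section
/- Let p : ℂⁿ → ℂ be a nonconstant polynomial and Z = p⁻¹(0). Then there exists a constant C > 0 such that for every z ∈ ℂⁿ and every r ≥ 1, the (2n−2)-dimensional Hausdorff measure of Z ∩ B_r(z) is at most C·r^{2n−2}, where B_r(z) is the Euclidean ball of radius r and center z. (This is the quantitative content of the statement that every algebraic hypersurface has asymptotic upper density zero with respect to any Bargmann-Fock weight.) -/
/-
A point of `Z = {p = 0}` either lies on the hypersurface `{∂ⱼ₀ p = 0}` of lower degree, handled by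
induction on the degree, or some partial derivative `∂ⱼ p` is nonzero there and of maximal modulus
among all partials. Near such a point, the projection `π` deleting the coordinate `wⱼ` is
bi-Lipschitz on `Z`, with a constant `2n + 2` depending only on `n`, because `Dp` is dominated by
its `j`-th component. Cut `Z ∩ B_r(z)` into countably many disjoint pieces of this kind: each has
measure at most `(2n + 2)^(2n-2)` times that of its projection, and the projections overlap at most
`deg p` times, since a line parallel to the `j`-th axis on which `∂ⱼ p` does not vanish identically
meets `Z` in at most `deg p` points. All projections lie in a ball of radius `r` in `ℂⁿ⁻¹`, whose
`(2n-2)`-dimensional Hausdorff measure is a constant times `r^(2n-2)`.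
-/

open MeasureTheory

noncomputable instance (n : ℕ) : MeasurableSpace (EuclideanSpace ℂ (Fin n)) :=
  MeasurableSpace.comap WithLp.ofLp MeasurableSpace.pi

instance (n : ℕ) : BorelSpace (EuclideanSpace ℂ (Fin n)) := PiLp.borelSpace 2

open Filter Topology Metric Set
open scoped NNReal ENNReal

namespace MvPolynomial

section Algebra

variable {R σ : Type*} [CommRing R]

theorem exists_pderiv_ne_zero [CharZero R] [IsDomain R] {p : MvPolynomial σ R}
    (hp : 0 < p.totalDegree) : ∃ j, pderiv j p ≠ 0 := by
  classical
  obtain ⟨m, hm, hm0⟩ : ∃ m ∈ p.support, m ≠ 0 := by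
    by_contra! h
    exact hp.ne' ((totalDegree_eq_zero_iff _ p).2 fun m hm i => by simp [h m hm])
  obtain ⟨j, hj⟩ : ∃ j, m j ≠ 0 := by simpa [Finsupp.ext_iff] using hm0
  refine ⟨j, fun h => ?_⟩
  have hcoeff := coeff_pderiv (i := j) p (m - Finsupp.single j 1)
  rw [h, coeff_zero, tsub_add_cancel_of_le
    (Finsupp.single_le_iff.2 (Nat.one_le_iff_ne_zero.2 hj))] at hcoeff
  exact mem_support_iff.1 hm (by simpa [Nat.cast_add_one_ne_zero] using hcoeff.symm)

theorem totalDegree_pderiv_lt {p : MvPolynomial σ R} (hp : 0 < p.totalDegree) (j : σ) :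
    (pderiv j p).totalDegree < p.totalDegree := by
  rw [totalDegree, Finset.sup_lt_iff hp]
  intro m hm
  have hm' : m + Finsupp.single j 1 ∈ p.support := by
    rw [mem_support_iff, coeff_pderiv] at hm
    exact mem_support_iff.2 (left_ne_zero_of_mul hm)
  have := le_totalDegree hm'
  rw [Finsupp.sum_add_index' (fun _ => rfl) (fun _ _ _ => rfl), Finsupp.sum_single_index rfl]
    at this
  omega

theorem natDegree_aeval_le_totalDegree {p : MvPolynomial σ R} {g : σ → Polynomial R}
    (hg : ∀ i, (g i).natDegree ≤ 1) : (aeval g p).natDegree ≤ p.totalDegree := by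
  conv_lhs => rw [p.as_sum, map_sum]
  refine Polynomial.natDegree_sum_le_of_forall_le _ _ fun m hm => ?_
  rw [aeval_monomial, ← Polynomial.C_eq_algebraMap]
  refine (Polynomial.natDegree_C_mul_le _ _).trans <| (Polynomial.natDegree_prod_le _ _).trans ?_
  calc ∑ i ∈ m.support, (g i ^ m i).natDegree ≤ ∑ i ∈ m.support, m i :=
        Finset.sum_le_sum fun i _ => (Polynomial.natDegree_pow_le_of_le _ (hg i)).trans (by simp)
    _ ≤ p.totalDegree := le_totalDegree hm

variable [DecidableEq σ]

noncomputable def axisRestriction (p : MvPolynomial σ R) (x : σ → R) (j : σ) : Polynomial R :=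
  aeval (Function.update (fun i => Polynomial.C (x i)) j Polynomial.X) p

theorem eval_axisRestriction (p : MvPolynomial σ R) (x : σ → R) (j : σ) (t : R) :
    (p.axisRestriction x j).eval t = eval (Function.update x j t) p := by
  rw [axisRestriction, aeval_def, polynomial_eval_eval₂]
  congr 1
  · ext; simp
  · ext i
    rcases eq_or_ne i j with rfl | hij <;> simp [*]

theorem derivative_axisRestriction (p : MvPolynomial σ R) (x : σ → R) (j : σ) :
    Polynomial.derivative (p.axisRestriction x j) = (pderiv j p).axisRestriction x j := by
  induction p using MvPolynomial.induction_on with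
  | C a => simp [axisRestriction]
  | add p q hp hq => simp only [axisRestriction, map_add] at *; rw [hp, hq]
  | mul_X p i hp =>
    simp only [axisRestriction, map_mul, aeval_X, Polynomial.derivative_mul, pderiv_mul,
      map_add] at *
    rw [hp]
    rcases eq_or_ne i j with rfl | hij
    · simp
    · simp [hij, pderiv_X_of_ne hij]

theorem natDegree_axisRestriction_le (p : MvPolynomial σ R) (x : σ → R) (j : σ) :
    (p.axisRestriction x j).natDegree ≤ p.totalDegree :=
  natDegree_aeval_le_totalDegree fun i => by
    rcases eq_or_ne i j with rfl | hij <;> simp [Polynomial.natDegree_X_le, *]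

theorem encard_setOf_eval_update_eq_zero_le [IsDomain R] {p : MvPolynomial σ R} {x : σ → R}
    {j : σ} (hx : eval x (pderiv j p) ≠ 0) :
    {t | eval (Function.update x j t) p = 0}.encard ≤ p.totalDegree := by
  classical
  have hq : p.axisRestriction x j ≠ 0 := fun h => hx <| by
    have := congrArg (Polynomial.eval (x j)) (derivative_axisRestriction p x j)
    rwa [h, Polynomial.derivative_zero, Polynomial.eval_zero, eval_axisRestriction,
      Function.update_eq_self, eq_comm] at this
  set q := p.axisRestriction x j
  calc {t | eval (Function.update x j t) p = 0}.encard = (q.roots.toFinset : Set R).encard := by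
        congr 1; ext t; simp [Polynomial.mem_roots hq, q, eval_axisRestriction]
    _ = q.roots.toFinset.card := encard_coe_eq_coe_finsetCard _
    _ ≤ p.totalDegree := by
        exact_mod_cast (Multiset.toFinset_card_le _).trans
          ((Polynomial.card_roots' q).trans (natDegree_axisRestriction_le p x j))

end Algebra

theorem hasStrictFDerivAt_eval {𝕜 σ : Type*} [NontriviallyNormedField 𝕜] [Fintype σ]
    (p : MvPolynomial σ 𝕜) (x : σ → 𝕜) :
    HasStrictFDerivAt (fun y => eval y p)
      (∑ i, eval x (pderiv i p) • (ContinuousLinearMap.proj i : (σ → 𝕜) →L[𝕜] 𝕜)) x := by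
  classical
  induction p using MvPolynomial.induction_on with
  | C a =>
    simp only [eval_C]
    exact (hasStrictFDerivAt_const (𝕜 := 𝕜) a x).congr_fderiv (by ext; simp)
  | add p q hp hq =>
    simp only [map_add]
    exact (hp.add hq).congr_fderiv (by ext; simp [add_mul, Finset.sum_add_distrib])
  | mul_X p i hp =>
    simp only [map_mul, eval_X]
    refine (hp.mul (hasStrictFDerivAt_apply i x)).congr_fderiv ?_
    ext v
    simp [pderiv_X, Pi.single_apply, apply_ite (eval x), ite_mul, add_mul,
      Finset.sum_add_distrib, Finset.mul_sum, mul_assoc]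

end MvPolynomial

namespace MeasureTheory

theorem tsum_measure_le_mul_measure_iUnion {α ι : Type*} [MeasurableSpace α] [Countable ι]
    (μ : Measure α) {T : ι → Set α} (hT : ∀ i, MeasurableSet (T i)) {N : ℕ}
    (hN : ∀ x, {i | x ∈ T i}.encard ≤ N) : ∑' i, μ (T i) ≤ N * μ (⋃ i, T i) := by
  have hpt (x : α) :
      ∑' i, (T i).indicator 1 x ≤ (⋃ i, T i).indicator (fun _ => (N : ℝ≥0∞)) x := by
    by_cases hx : x ∈ ⋃ i, T i
    · have : ∑' i, (T i).indicator (1 : α → ℝ≥0∞) x = {i | x ∈ T i}.encard := by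
        rw [← ENNReal.tsum_set_one, tsum_subtype {i | x ∈ T i} fun _ => (1 : ℝ≥0∞)]
        rfl
      rw [this, indicator_of_mem hx]
      exact_mod_cast hN x
    · simp_all
  calc ∑' i, μ (T i) = ∫⁻ x, ∑' i, (T i).indicator 1 x ∂μ := by
        rw [lintegral_tsum fun i => (measurable_one.indicator (hT i)).aemeasurable]
        simp [lintegral_indicator_one (hT _)]
    _ ≤ ∫⁻ x, (⋃ i, T i).indicator (fun _ => (N : ℝ≥0∞)) x ∂μ := lintegral_mono hpt
    _ = N * μ (⋃ i, T i) := lintegral_indicator_const (MeasurableSet.iUnion hT) _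

variable {X Y : Type*} [MetricSpace X] [MeasurableSpace X] [BorelSpace X]
  [MetricSpace Y] [MeasurableSpace Y] [BorelSpace Y]

theorem hausdorffMeasure_le_of_dist_le_mul_dist {f : X → Y} {s : Set X} {K : ℝ≥0}
    (hf : ∀ a ∈ s, ∀ b ∈ s, dist a b ≤ K * dist (f a) (f b)) {d : ℝ} (hd : 0 ≤ d) :
    μH[d] s ≤ K ^ d * μH[d] (f '' s) := by
  have hanti : AntilipschitzWith K (s.domRestrict f) :=
    AntilipschitzWith.of_le_mul_dist fun a b => hf a a.2 b b.2
  calc μH[d] s = μH[d] (univ : Set s) := by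
        rw [← (isometry_subtype_coe (s := s)).hausdorffMeasure_image (Or.inl hd),
          Subtype.coe_image_univ]
    _ ≤ K ^ d * μH[d] (s.domRestrict f '' univ) := hanti.le_hausdorffMeasure_image hd univ
    _ = K ^ d * μH[d] (f '' s) := by rw [image_univ, range_domRestrict]

theorem hausdorffMeasure_le_of_locally_dist_le_of_encard_fiber_le [PolishSpace X] {f : X → Y}
    (hf : Continuous f) {S : Set X} (hS : MeasurableSet S) {K : ℝ≥0} {N : ℕ}
    (hloc : ∀ x ∈ S, ∃ U ∈ 𝓝 x, ∀ a ∈ S ∩ U, ∀ b ∈ S ∩ U, dist a b ≤ K * dist (f a) (f b))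
    (hfib : ∀ y, (S ∩ f ⁻¹' {y}).encard ≤ N) {d : ℝ} (hd : 0 ≤ d) :
    μH[d] S ≤ K ^ d * N * μH[d] (f '' S) := by
  rcases S.eq_empty_or_nonempty with rfl | ⟨x₀, hx₀⟩
  · simp
  choose! U hU hUK using hloc
  obtain ⟨t, htS, htc, hcover⟩ := TopologicalSpace.countable_cover_nhdsWithin
    fun x (_ : x ∈ S) => mem_nhdsWithin_of_mem_nhds (interior_mem_nhds.2 (hU x ‹_›))
  obtain ⟨e, rfl⟩ := htc.exists_eq_range
    (by rcases mem_iUnion₂.1 (hcover hx₀) with ⟨x, hx, -⟩; exact ⟨x, hx⟩)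
  set P := disjointed fun k => S ∩ interior (U (e k))
  have hPS (k : ℕ) : P k ⊆ S := (disjointed_le _ k).trans inter_subset_left
  have hPU : ⋃ k, P k = S := by
    rw [iUnion_disjointed, ← inter_iUnion]
    exact inter_eq_self_of_subset_left (by simpa using hcover)
  have hPmeas : ∀ k, MeasurableSet (P k) :=
    .disjointed fun k => hS.inter isOpen_interior.measurableSet
  have hPK (k : ℕ) : ∀ a ∈ P k, ∀ b ∈ P k, dist a b ≤ K * dist (f a) (f b) := fun a ha b hb =>
    have hsub : P k ⊆ S ∩ interior (U (e k)) := disjointed_le _ k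
    hUK (e k) (htS (mem_range_self k)) a ⟨(hsub ha).1, interior_subset (hsub ha).2⟩ b
      ⟨(hsub hb).1, interior_subset (hsub hb).2⟩
  have hinj (k : ℕ) : InjOn f (P k) := fun a ha b hb hab => by
    simpa [hab] using hPK k a ha b hb
  have hmult (y : Y) : {k | y ∈ f '' P k}.encard ≤ N := by
    have : Nonempty X := ⟨x₀⟩
    choose! g hgP hgy using fun k (hk : k ∈ {k | y ∈ f '' P k}) => hk
    refine (encard_le_encard_of_injOn (t := S ∩ f ⁻¹' {y}) (f := g)
      (fun k hk => ⟨hPS k (hgP k hk), hgy k hk⟩) fun k hk l hl hkl => ?_).trans (hfib y)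
    by_contra hne
    exact disjoint_left.1 (disjoint_disjointed _ hne) (hgP k hk) (hkl ▸ hgP l hl)
  calc μH[d] S ≤ ∑' k, μH[d] (P k) := hPU ▸ measure_iUnion_le P
    _ ≤ ∑' k, K ^ d * μH[d] (f '' P k) :=
        ENNReal.tsum_le_tsum fun k => hausdorffMeasure_le_of_dist_le_mul_dist (hPK k) hd
    _ = K ^ d * ∑' k, μH[d] (f '' P k) := ENNReal.tsum_mul_left
    _ ≤ K ^ d * (N * μH[d] (⋃ k, f '' P k)) := by
        gcongr
        exact tsum_measure_le_mul_measure_iUnion _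
          (fun k => (hPmeas k).image_of_continuousOn_injOn hf.continuousOn (hinj k)) hmult
    _ = K ^ d * N * μH[d] (f '' S) := by rw [← image_iUnion, hPU, mul_assoc]

theorem hausdorffMeasure_closedBall_le_of_finrank_eq {F : Type*} [NormedAddCommGroup F]
    [NormedSpace ℝ F] [FiniteDimensional ℝ F] [MeasurableSpace F] [BorelSpace F] {m : ℕ}
    (hm : Module.finrank ℝ F = m) :
    ∃ C : ℝ≥0, ∀ (y : F) (r : ℝ), μH[m] (closedBall y r) ≤ C * ENNReal.ofReal r ^ m := by
  subst hm
  refine ⟨(μH[Module.finrank ℝ F] (ball (0 : F) 1)).toNNReal, fun y r => ?_⟩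
  rcases lt_or_ge r 0 with hr | hr
  · simp [closedBall_eq_empty.2 hr]
  rw [Measure.addHaar_closedBall _ y hr, ENNReal.coe_toNNReal measure_ball_lt_top.ne,
    ENNReal.ofReal_pow hr, mul_comm]

end MeasureTheory

section Growth

variable {X : Type*} [MetricSpace X] [MeasurableSpace X] [BorelSpace X] {d : ℕ} {S T : Set X}

def HasHausdorffGrowth (d : ℕ) (S : Set X) : Prop :=
  ∃ C : ℝ≥0, ∀ (z : X) (r : ℝ), μH[d] (S ∩ ball z r) ≤ C * ENNReal.ofReal r ^ d

theorem HasHausdorffGrowth.mono (hT : HasHausdorffGrowth d T) (hST : S ⊆ T) :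
    HasHausdorffGrowth d S :=
  let ⟨C, hC⟩ := hT
  ⟨C, fun z r => (measure_mono (inter_subset_inter_left _ hST)).trans (hC z r)⟩

theorem HasHausdorffGrowth.union (hS : HasHausdorffGrowth d S) (hT : HasHausdorffGrowth d T) :
    HasHausdorffGrowth d (S ∪ T) := by
  obtain ⟨C, hC⟩ := hS
  obtain ⟨C', hC'⟩ := hT
  refine ⟨C + C', fun z r => ?_⟩
  rw [union_inter_distrib_right, ENNReal.coe_add, add_mul]
  exact (measure_union_le _ _).trans (add_le_add (hC z r) (hC' z r))

theorem hasHausdorffGrowth_iUnion {ι : Type*} [Fintype ι] {S : ι → Set X}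
    (hS : ∀ i, HasHausdorffGrowth d (S i)) : HasHausdorffGrowth d (⋃ i, S i) := by
  choose C hC using hS
  refine ⟨∑ i, C i, fun z r => ?_⟩
  rw [iUnion_inter, ENNReal.ofNNReal_finsetSum, Finset.sum_mul]
  exact (measure_iUnion_fintype_le _ _).trans (Finset.sum_le_sum fun i _ => hC i z r)

end Growth

open MvPolynomial

namespace EuclideanSpace

variable {𝕜 ι : Type*} [RCLike 𝕜] [Fintype ι] [DecidableEq ι]

noncomputable def deleteCoord (j : ι) : EuclideanSpace 𝕜 ι →L[𝕜] EuclideanSpace 𝕜 {i // i ≠ j} :=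
  LinearMap.toContinuousLinearMap
    { toFun x := WithLp.toLp 2 fun i => x i
      map_add' _ _ := rfl
      map_smul' _ _ := rfl }

@[simp]
theorem deleteCoord_apply (j : ι) (x : EuclideanSpace 𝕜 ι) (i : {i // i ≠ j}) :
    deleteCoord j x i = x i :=
  rfl

theorem norm_sq_eq_norm_apply_sq_add_norm_deleteCoord_sq (x : EuclideanSpace 𝕜 ι) (j : ι) :
    ‖x‖ ^ 2 = ‖x j‖ ^ 2 + ‖deleteCoord j x‖ ^ 2 := by
  rw [norm_sq_eq, norm_sq_eq, Fintype.sum_eq_add_sum_subtype_ne _ j]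
  rfl

theorem norm_deleteCoord_le (x : EuclideanSpace 𝕜 ι) (j : ι) : ‖deleteCoord j x‖ ≤ ‖x‖ := by
  have := norm_sq_eq_norm_apply_sq_add_norm_deleteCoord_sq x j
  nlinarith [sq_nonneg ‖x j‖, norm_nonneg x, norm_nonneg (deleteCoord j x)]

theorem norm_le_norm_apply_add_norm_deleteCoord (x : EuclideanSpace 𝕜 ι) (j : ι) :
    ‖x‖ ≤ ‖x j‖ + ‖deleteCoord j x‖ := by
  have := norm_sq_eq_norm_apply_sq_add_norm_deleteCoord_sq x j
  nlinarith [norm_nonneg x, norm_nonneg (x j), norm_nonneg (deleteCoord j x)]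

theorem ofLp_eq_update_of_deleteCoord_eq {x y : EuclideanSpace 𝕜 ι} {j : ι}
    (h : deleteCoord j x = deleteCoord j y) : x.ofLp = Function.update y.ofLp j (x j) := by
  ext i
  rcases eq_or_ne i j with rfl | hij
  · simp
  · simpa [hij] using congrArg (· ⟨i, hij⟩) h

theorem norm_le_mul_norm_deleteCoord_of_dominant {A : ι → 𝕜} {j : ι}
    (hA : ∀ i, ‖A i‖ ≤ ‖A j‖) (hAj : A j ≠ 0) {u : EuclideanSpace 𝕜 ι}
    (hu : ‖∑ i, A i * u i‖ ≤ ‖A j‖ / 2 * ‖u‖) :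
    ‖u‖ ≤ (2 * Fintype.card ι + 2) * ‖deleteCoord j u‖ := by
  set M := ‖A j‖
  set s := ‖deleteCoord j u‖
  have hM : 0 < M := norm_pos_iff.2 hAj
  have hrest : ‖∑ i : {i // i ≠ j}, A i * u i‖ ≤ Fintype.card ι * (M * s) :=
    calc ‖∑ i : {i // i ≠ j}, A i * u i‖ ≤ ∑ _i : {i // i ≠ j}, M * s :=
          (norm_sum_le _ _).trans <| Finset.sum_le_sum fun i _ => by
            rw [norm_mul]
            exact mul_le_mul (hA i) (PiLp.norm_apply_le (deleteCoord j u) i) (norm_nonneg _) hM.le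
      _ ≤ Fintype.card ι * (M * s) := by
          rw [Finset.sum_const, Finset.card_univ, nsmul_eq_mul]
          gcongr
          exact_mod_cast Fintype.card_subtype_le _
  have huj : M * ‖u j‖ ≤ M * (‖u‖ / 2 + Fintype.card ι * s) := by
    rw [Fintype.sum_eq_add_sum_subtype_ne _ j] at hu
    calc M * ‖u j‖
        = ‖(A j * u j + ∑ i : {i // i ≠ j}, A i * u i) - ∑ i : {i // i ≠ j}, A i * u i‖ := by
          rw [add_sub_cancel_right, norm_mul]
      _ ≤ M / 2 * ‖u‖ + Fintype.card ι * (M * s) := (norm_sub_le _ _).trans (add_le_add hu hrest)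
      _ = M * (‖u‖ / 2 + Fintype.card ι * s) := by ring
  have := le_of_mul_le_mul_left huj hM
  have := norm_le_norm_apply_add_norm_deleteCoord u j
  linarith

theorem exists_mem_nhds_norm_sub_le_of_dominant_pderiv {p : MvPolynomial ι 𝕜}
    {ζ : EuclideanSpace 𝕜 ι} {j : ι} (hj : eval ζ.ofLp (pderiv j p) ≠ 0)
    (hmax : ∀ i, ‖eval ζ.ofLp (pderiv i p)‖ ≤ ‖eval ζ.ofLp (pderiv j p)‖) :
    ∃ U ∈ 𝓝 ζ, ∀ a ∈ U, ∀ b ∈ U, eval a.ofLp p = 0 → eval b.ofLp p = 0 →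
      ‖a - b‖ ≤ (2 * Fintype.card ι + 2) * ‖deleteCoord j a - deleteCoord j b‖ := by
  have hD := (hasStrictFDerivAt_eval p ζ.ofLp).comp ζ (EuclideanSpace.equiv ι 𝕜).hasStrictFDerivAt
  have hε : 0 < ‖eval ζ.ofLp (pderiv j p)‖ / 2 := by positivity
  have hsmall := (hasStrictFDerivAt_iff_isLittleO.1 hD).def hε
  rw [nhds_prod_eq] at hsmall
  obtain ⟨U, hU, hUD⟩ := mem_prod_self_iff.1 hsmall
  refine ⟨U, hU, fun a ha b hb hpa hpb => ?_⟩
  rw [← map_sub]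
  refine norm_le_mul_norm_deleteCoord_of_dominant hmax hj ?_
  simpa [hpa, hpb, mul_comm] using hUD (mk_mem_prod ha hb)

theorem encard_zeroSet_inter_deleteCoord_preimage_le {p : MvPolynomial ι 𝕜} {j : ι}
    {w₀ : EuclideanSpace 𝕜 ι} (hw₀ : eval w₀.ofLp (pderiv j p) ≠ 0) :
    ({w : EuclideanSpace 𝕜 ι | eval w.ofLp p = 0} ∩
      deleteCoord j ⁻¹' {deleteCoord j w₀}).encard ≤ p.totalDegree := by
  calc _ ≤ ((fun t => WithLp.toLp 2 (Function.update w₀.ofLp j t)) ''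
          {t | eval (Function.update w₀.ofLp j t) p = 0}).encard := by
        refine encard_le_encard fun w ⟨hw, hπ⟩ => ⟨w j, ?_, ?_⟩
        · rw [mem_ofPred_eq, ← ofLp_eq_update_of_deleteCoord_eq hπ]
          exact hw
        · simp only [← ofLp_eq_update_of_deleteCoord_eq hπ, WithLp.toLp_ofLp]
    _ ≤ _ := encard_image_le _ _
    _ ≤ _ := encard_setOf_eval_update_eq_zero_le hw₀

theorem finrank_real_complex_subtype_ne (j : ι) :
    Module.finrank ℝ (EuclideanSpace ℂ {i // i ≠ j}) = 2 * Fintype.card ι - 2 := by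
  rw [← Module.finrank_mul_finrank ℝ ℂ, Complex.finrank_real_complex, finrank_euclideanSpace,
    Fintype.card_subtype_compl, Fintype.card_subtype_eq]
  have := Fintype.card_pos_iff.2 ⟨j⟩
  omega

end EuclideanSpace

section Hypersurface

open EuclideanSpace

variable {ι : Type*} [Fintype ι]

def dominantZeroSet (p : MvPolynomial ι ℂ) (j : ι) : Set (EuclideanSpace ℂ ι) :=
  {w | eval w.ofLp p = 0 ∧ eval w.ofLp (pderiv j p) ≠ 0 ∧
    ∀ i, ‖eval w.ofLp (pderiv i p)‖ ≤ ‖eval w.ofLp (pderiv j p)‖}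

theorem measurableSet_dominantZeroSet (p : MvPolynomial ι ℂ) (j : ι) :
    MeasurableSet (dominantZeroSet p j) := by
  have hcont (q : MvPolynomial ι ℂ) : Continuous fun w : EuclideanSpace ℂ ι => eval w.ofLp q :=
    (continuous_eval q).comp (PiLp.continuous_ofLp 2 _)
  simp only [dominantZeroSet, ofPred_and, ofPred_forall]
  exact (measurableSet_eq_fun (hcont p).measurable measurable_const).inter
    ((measurableSet_eq_fun (hcont _).measurable measurable_const).compl.inter
      (MeasurableSet.iInter fun i =>
        measurableSet_le (hcont _).norm.measurable (hcont _).norm.measurable))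

theorem hasHausdorffGrowth_dominantZeroSet (p : MvPolynomial ι ℂ) (j : ι) :
    HasHausdorffGrowth (2 * Fintype.card ι - 2) (dominantZeroSet p j) := by
  classical
  set d := 2 * Fintype.card ι - 2
  set K : ℝ≥0 := 2 * Fintype.card ι + 2
  obtain ⟨C, hC⟩ := hausdorffMeasure_closedBall_le_of_finrank_eq (finrank_real_complex_subtype_ne j)
  refine ⟨K ^ d * p.totalDegree * C, fun z r => ?_⟩
  set S := dominantZeroSet p j ∩ ball z r
  have hloc : ∀ x ∈ S, ∃ U ∈ 𝓝 x, ∀ a ∈ S ∩ U, ∀ b ∈ S ∩ U,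
      dist a b ≤ K * dist (deleteCoord j a) (deleteCoord j b) := by
    rintro x ⟨⟨-, hxj, hxmax⟩, -⟩
    obtain ⟨U, hU, hUK⟩ := exists_mem_nhds_norm_sub_le_of_dominant_pderiv hxj hxmax
    refine ⟨U, hU, fun a ⟨⟨ha, _⟩, haU⟩ b ⟨⟨hb, _⟩, hbU⟩ => ?_⟩
    simpa [K, dist_eq_norm] using hUK a haU b hbU ha.1 hb.1
  have hfib (y : EuclideanSpace ℂ {i // i ≠ j}) :
      (S ∩ deleteCoord j ⁻¹' {y}).encard ≤ p.totalDegree := by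
    rcases (S ∩ deleteCoord j ⁻¹' {y}).eq_empty_or_nonempty with h | ⟨w₀, ⟨hw₀, -⟩, rfl⟩
    · simp [h]
    refine le_trans (encard_le_encard ?_) (encard_zeroSet_inter_deleteCoord_preimage_le hw₀.2.1)
    exact fun w hw => ⟨hw.1.1.1, hw.2⟩
  have himage : deleteCoord j '' S ⊆ closedBall (deleteCoord j z) r := by
    rintro _ ⟨w, ⟨-, hw⟩, rfl⟩
    rw [mem_closedBall, dist_eq_norm, ← map_sub]
    exact (norm_deleteCoord_le _ j).trans (mem_ball_iff_norm.1 hw).le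
  calc μH[d] S ≤ K ^ (d : ℝ) * p.totalDegree * μH[d] (deleteCoord j '' S) :=
        hausdorffMeasure_le_of_locally_dist_le_of_encard_fiber_le (deleteCoord j).continuous
          ((measurableSet_dominantZeroSet p j).inter measurableSet_ball) hloc hfib d.cast_nonneg
    _ ≤ K ^ (d : ℝ) * p.totalDegree * (C * ENNReal.ofReal r ^ d) := by
        gcongr
        exact (measure_mono himage).trans (hC _ r)
    _ = ↑(K ^ d * p.totalDegree * C) * ENNReal.ofReal r ^ d := by
        rw [ENNReal.rpow_natCast]
        push_cast
        ring

theorem hasHausdorffGrowth_zeroSet {p : MvPolynomial ι ℂ} (hp : p ≠ 0) :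
    HasHausdorffGrowth (2 * Fintype.card ι - 2) {w : EuclideanSpace ℂ ι | eval w.ofLp p = 0} := by
  induction hdeg : p.totalDegree using Nat.strong_induction_on generalizing p with
  | _ k ih =>
    rcases Nat.eq_zero_or_pos k with rfl | hk
    · rw [totalDegree_eq_zero_iff_eq_C] at hdeg
      have hc : coeff 0 p ≠ 0 := fun h => hp (by rw [hdeg, h, C_0])
      have hempty : {w : EuclideanSpace ℂ ι | eval w.ofLp p = 0} = ∅ :=
        eq_empty_of_forall_notMem fun w hw => hc (by rwa [mem_ofPred_eq, hdeg, eval_C] at hw)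
      exact ⟨0, fun z r => by simp [hempty]⟩
    subst hdeg
    obtain ⟨j₀, hj₀⟩ := exists_pderiv_ne_zero hk
    refine ((ih _ (totalDegree_pderiv_lt hk j₀) hj₀ rfl).union
      (hasHausdorffGrowth_iUnion (hasHausdorffGrowth_dominantZeroSet p))).mono fun w hw => ?_
    by_cases h₀ : eval w.ofLp (pderiv j₀ p) = 0
    · exact Or.inl h₀
    obtain ⟨j, -, hj⟩ := Finset.univ.exists_max_image (fun i => ‖eval w.ofLp (pderiv i p)‖)
      ⟨j₀, Finset.mem_univ _⟩
    refine Or.inr (mem_iUnion.2 ⟨j, hw, fun h => h₀ ?_, fun i => hj i (Finset.mem_univ i)⟩)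
    simpa [h] using hj j₀ (Finset.mem_univ _)

end Hypersurface

theorem statement4_general (n : ℕ) (p : MvPolynomial (Fin n) ℂ)
    (hp : 0 < p.totalDegree) :
    ∃ C : ℝ, 0 < C ∧ ∀ (z : EuclideanSpace ℂ (Fin n)) (r : ℝ), 1 ≤ r →
      μH[((2 * n - 2 : ℕ) : ℝ)]
          ({w : EuclideanSpace ℂ (Fin n) | MvPolynomial.eval (fun i => w i) p = 0} ∩
            Metric.ball z r)
        ≤ ENNReal.ofReal (C * r ^ (2 * n - 2)) := by
  obtain ⟨C, hC⟩ := hasHausdorffGrowth_zeroSet (p := p) fun h => by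
    rw [h, totalDegree_zero] at hp
    exact hp.false
  rw [Fintype.card_fin] at hC
  refine ⟨C + 1, by positivity, fun z r hr => (hC z r).trans ?_⟩
  rw [← ENNReal.ofReal_pow (by linarith), ← ENNReal.ofReal_coe_nnreal,
    ← ENNReal.ofReal_mul C.coe_nonneg]
  gcongr
  linarith

/-- If `p` is a nonconstant polynomial on `ℂⁿ` with zero set `Z`, then the
`(2n-2)`-dimensional Hausdorff measure (w.r.t. the Euclidean metric) of `Z ∩ B_r(z)`
is `O(r^{2n-2})`, uniformly in `z`, for `r ≥ 1`. -/
theorem statement4 (n : ℕ) (hn : 1 ≤ n) (p : MvPolynomial (Fin n) ℂ)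
    (hp : 0 < p.totalDegree) :
    ∃ C : ℝ, 0 < C ∧ ∀ (z : EuclideanSpace ℂ (Fin n)) (r : ℝ), 1 ≤ r →
      μH[((2 * n - 2 : ℕ) : ℝ)]
          ({w : EuclideanSpace ℂ (Fin n) | MvPolynomial.eval (fun i => w i) p = 0} ∩
            Metric.ball z r)
        ≤ ENNReal.ofReal (C * r ^ (2 * n - 2)) :=
  statement4_general n p hp
end

section
/- There exist constants c > 0, C > 0 and δ₀ ∈ (0, 1) such that for every δ ∈ (0, δ₀) there exists a holomorphic function f on ℂ* satisfying |f(1/δ)|² e^{−δ² − δ^{−2}} ≥ c and ∫_{ℂ*} |f(t)|² e^{−|t|² − |t|^{−2}} (1 + |t|⁻⁴) dA(t) ≤ C·δ^{−1/2}. (This produces, on the component {xy = 1} of the curve C₁ parametrized by t ↦ (t, 1/t), a function of norm O(δ^{−1/2}) in the standard Bargmann-Fock Bergman space of the curve whose normalized pointwise value at the point (1/δ, δ) is bounded below.) -/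
/-!
The test function is the Bargmann–Fock coherent state at `1/δ`,
`f(t) = exp(t/δ + (δ² - δ⁻²)/2)`, normalized so that `|f(t)|² e^{-|t|²} = e^{δ² - |t - 1/δ|²}`;
its normalized value at `1/δ` is therefore exactly `1`. The rest of the weight,
`e^{-s}(1 + s²)` with `s = |t|⁻²`, is at most `2`, so the norm of `f` is bounded by
`2 e^{δ²}` times a Gaussian integral, which is `O(1)` and a fortiori `O(δ^{-1/2})`.
-/

open MeasureTheory

theorem lintegral_exp_neg_norm_sub_sq {V : Type*} [NormedAddCommGroup V] [InnerProductSpace ℝ V]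
    [FiniteDimensional ℝ V] [MeasurableSpace V] [BorelSpace V] (a : V) :
    ∫⁻ v : V, ENNReal.ofReal (Real.exp (-‖v - a‖ ^ 2)) =
      ENNReal.ofReal (Real.pi ^ ((Module.finrank ℝ V : ℝ) / 2)) := by
  rw [lintegral_sub_right_eq_self (fun v => ENNReal.ofReal (Real.exp (-‖v‖ ^ 2))) a]
  have hint : Integrable (fun v : V => Real.exp (-1 * ‖v‖ ^ 2)) := by
    refine (GaussianFourier.integrable_cexp_neg_mul_sq_norm_add (b := 1) (by norm_num) 0
      (0 : V)).norm.congr (Filter.Eventually.of_forall fun v => ?_)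
    simp [Complex.norm_exp, ← Complex.ofReal_pow]
  rw [← div_one Real.pi, ← GaussianFourier.integral_rexp_neg_mul_sq_norm one_pos,
    ofReal_integral_eq_lintegral_ofReal hint
      (Filter.Eventually.of_forall fun _ => (Real.exp_pos _).le)]
  simp

theorem one_add_sq_le_two_mul_exp {u : ℝ} (hu : 0 ≤ u) : 1 + u ^ 2 ≤ 2 * Real.exp u := by
  nlinarith [Real.quadratic_le_exp_of_nonneg hu]

noncomputable def peakFunction (δ : ℝ) (t : ℂ) : ℂ :=
  Complex.exp (((δ ^ 2 - (δ ^ 2)⁻¹) / 2 : ℝ) + t / δ)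

theorem differentiable_peakFunction (δ : ℝ) : Differentiable ℂ (peakFunction δ) := by
  unfold peakFunction; fun_prop

theorem sq_norm_peakFunction_mul_exp (δ : ℝ) (t : ℂ) :
    ‖peakFunction δ t‖ ^ 2 * Real.exp (-‖t‖ ^ 2) = Real.exp (δ ^ 2 - ‖t - (δ : ℂ)⁻¹‖ ^ 2) := by
  have hsub : ‖t - (δ : ℂ)⁻¹‖ ^ 2 = ‖t‖ ^ 2 - 2 * (t.re * δ⁻¹) + (δ⁻¹) ^ 2 := by
    simp only [Complex.sq_norm, Complex.normSq_apply, Complex.sub_re, Complex.sub_im,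
      ← Complex.ofReal_inv, Complex.ofReal_re, Complex.ofReal_im, sub_zero]
    ring
  rw [peakFunction, Complex.norm_exp, ← Real.exp_nat_mul, ← Real.exp_add, hsub]
  congr 1
  simp only [Complex.add_re, Complex.ofReal_re, Complex.div_ofReal_re]
  push_cast
  ring

theorem sq_norm_peakFunction_inv_mul_exp_eq_one (δ : ℝ) :
    ‖peakFunction δ (δ : ℂ)⁻¹‖ ^ 2 * Real.exp (-(δ ^ 2 + (δ ^ 2)⁻¹)) = 1 := by
  have hnorm : ‖(δ : ℂ)⁻¹‖ ^ 2 = (δ ^ 2)⁻¹ := by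
    rw [norm_inv, Complex.norm_real, Real.norm_eq_abs, inv_pow, sq_abs]
  have key := sq_norm_peakFunction_mul_exp δ (δ : ℂ)⁻¹
  rw [sub_self, norm_zero, hnorm] at key
  calc ‖peakFunction δ (δ : ℂ)⁻¹‖ ^ 2 * Real.exp (-(δ ^ 2 + (δ ^ 2)⁻¹))
      = ‖peakFunction δ (δ : ℂ)⁻¹‖ ^ 2 * Real.exp (-(δ ^ 2)⁻¹) * Real.exp (-δ ^ 2) := by
        rw [mul_assoc, ← Real.exp_add, neg_add, add_comm]
    _ = 1 := by rw [key, ← Real.exp_add]; simp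

theorem peakFunction_integrand_le (δ : ℝ) (t : ℂ) :
    ‖peakFunction δ t‖ ^ 2 * Real.exp (-(‖t‖ ^ 2 + (‖t‖ ^ 2)⁻¹)) * (1 + (‖t‖ ^ 4)⁻¹) ≤
      2 * Real.exp (δ ^ 2) * Real.exp (-‖t - (δ : ℂ)⁻¹‖ ^ 2) := by
  set S := (‖t‖ ^ 2)⁻¹ with hS
  have hS0 : 0 ≤ S := by positivity
  have hS4 : (‖t‖ ^ 4)⁻¹ = S ^ 2 := by rw [hS, inv_pow, ← pow_mul]
  calc ‖peakFunction δ t‖ ^ 2 * Real.exp (-(‖t‖ ^ 2 + S)) * (1 + (‖t‖ ^ 4)⁻¹)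
      = ‖peakFunction δ t‖ ^ 2 * Real.exp (-‖t‖ ^ 2) * (Real.exp (-S) * (1 + S ^ 2)) := by
        rw [neg_add, Real.exp_add, hS4]; ring
    _ ≤ Real.exp (δ ^ 2 - ‖t - (δ : ℂ)⁻¹‖ ^ 2) * 2 := by
        rw [sq_norm_peakFunction_mul_exp]
        gcongr
        rw [Real.exp_neg, inv_mul_le_iff₀ (Real.exp_pos S)]
        exact (one_add_sq_le_two_mul_exp hS0).trans_eq (mul_comm _ _)
    _ = 2 * Real.exp (δ ^ 2) * Real.exp (-‖t - (δ : ℂ)⁻¹‖ ^ 2) := by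
        rw [sub_eq_add_neg, Real.exp_add]; ring

theorem setLIntegral_peakFunction_le (δ : ℝ) :
    ∫⁻ t in {(0 : ℂ)}ᶜ, ENNReal.ofReal (‖peakFunction δ t‖ ^ 2 *
        Real.exp (-(‖t‖ ^ 2 + (‖t‖ ^ 2)⁻¹)) * (1 + (‖t‖ ^ 4)⁻¹)) ≤
      ENNReal.ofReal (2 * Real.exp (δ ^ 2) * Real.pi) := by
  calc _ ≤ ∫⁻ t : ℂ, ENNReal.ofReal (‖peakFunction δ t‖ ^ 2 *
          Real.exp (-(‖t‖ ^ 2 + (‖t‖ ^ 2)⁻¹)) * (1 + (‖t‖ ^ 4)⁻¹)) :=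
        setLIntegral_le_lintegral _ _
    _ ≤ ∫⁻ t : ℂ, ENNReal.ofReal (2 * Real.exp (δ ^ 2)) *
          ENNReal.ofReal (Real.exp (-‖t - (δ : ℂ)⁻¹‖ ^ 2)) := by
        refine lintegral_mono fun t => ?_
        rw [← ENNReal.ofReal_mul (by positivity)]
        exact ENNReal.ofReal_le_ofReal (peakFunction_integrand_le δ t)
    _ = ENNReal.ofReal (2 * Real.exp (δ ^ 2) * Real.pi) := by
        rw [lintegral_const_mul' _ _ ENNReal.ofReal_ne_top, lintegral_exp_neg_norm_sub_sq,
          Complex.finrank_real_complex, ← ENNReal.ofReal_mul (by positivity)]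
        norm_num

/-- Construction, on the component `{xy = 1}` of the curve `C₁` (parametrized by
`t ↦ (t, 1/t)`, with pulled-back standard weight `|t|² + |t|⁻²` and area form
`(1 + |t|⁻⁴)dA`), of holomorphic functions of Bergman norm `O(δ^{-1/2})` whose normalized
value at `t = 1/δ` is bounded below. -/
theorem statement15 :
    ∃ c : ℝ, 0 < c ∧ ∃ C : ℝ, 0 < C ∧ ∃ δ₀ : ℝ, 0 < δ₀ ∧ δ₀ < 1 ∧
      ∀ δ : ℝ, 0 < δ → δ < δ₀ →
        ∃ f : ℂ → ℂ, (∀ t : ℂ, t ≠ 0 → DifferentiableAt ℂ f t) ∧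
          c ≤ ‖f ((δ : ℂ)⁻¹)‖ ^ 2 * Real.exp (-(δ ^ 2 + (δ ^ 2)⁻¹)) ∧
          (∫⁻ t in {(0 : ℂ)}ᶜ,
              ENNReal.ofReal (‖f t‖ ^ 2 * Real.exp (-(‖t‖ ^ 2 + (‖t‖ ^ 2)⁻¹)) *
                (1 + (‖t‖ ^ 4)⁻¹)))
            ≤ ENNReal.ofReal (C / Real.sqrt δ) := by
  refine ⟨1, one_pos, 2 * Real.exp 1 * Real.pi, by positivity, 1 / 2, by norm_num, by norm_num,
    fun δ hδ hδ₀ => ⟨peakFunction δ, fun t _ => differentiable_peakFunction δ t,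
      (sq_norm_peakFunction_inv_mul_exp_eq_one δ).ge, (setLIntegral_peakFunction_le δ).trans ?_⟩⟩
  have hexp : Real.exp (δ ^ 2) ≤ Real.exp 1 := Real.exp_le_exp.mpr (by nlinarith)
  have hsqrt : Real.sqrt δ ≤ 1 := Real.sqrt_le_one.mpr (by linarith)
  refine ENNReal.ofReal_le_ofReal ?_
  rw [le_div_iff₀ (Real.sqrt_pos.mpr hδ)]
  calc 2 * Real.exp (δ ^ 2) * Real.pi * Real.sqrt δ ≤ 2 * Real.exp 1 * Real.pi * 1 := by gcongr
    _ = 2 * Real.exp 1 * Real.pi := mul_one _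
end

section
/- The surface S = {(x,y,z) ∈ ℂ³ : z = xy²} is not uniformly flat. Explicitly: for every δ ∈ (0, 1), the points p = (1/δ, δ, δ) and q = (1/δ, −δ, δ) lie on S, are distinct, and the point w = (1/δ − δ³/2, 0, 3δ/2) ∈ ℂ³ satisfies: (i) w − p is orthogonal (with respect to the Hermitian inner product on ℂ³) to the tangent space T_pS = span_ℂ{(1, 0, δ²), (0, 1, 2)}, (ii) w − q is orthogonal to T_qS = span_ℂ{(1, 0, δ²), (0, 1, −2)}, and (iii) ‖w − p‖ = ‖w − q‖ < 2δ. Consequently, for every ε > 0 there exist distinct points p, q ∈ S whose complex normal disks of radius ε intersect, so the ε-neighborhood of S is not a tubular neighborhood for any ε > 0. -/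
open ComplexConjugate

/-- The Hermitian inner product on `ℂ³`. -/
def herm3 (u v : ℂ × ℂ × ℂ) : ℂ :=
  u.1 * conj v.1 + u.2.1 * conj v.2.1 + u.2.2 * conj v.2.2

/-- The Euclidean norm on `ℂ³`. -/
noncomputable def nrm3 (u : ℂ × ℂ × ℂ) : ℝ :=
  Real.sqrt (‖u.1‖ ^ 2 + ‖u.2.1‖ ^ 2 + ‖u.2.2‖ ^ 2)

/-- The surface `S = {z = xy²} ⊆ ℂ³`. -/
def Ssurf : Set (ℂ × ℂ × ℂ) := {w | w.2.2 = w.1 * w.2.1 ^ 2}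

lemma key (δ : ℝ) (h0 : 0 < δ) (h1 : δ < 1) :
      (((δ : ℂ)⁻¹, (δ : ℂ), (δ : ℂ)) ∈ Ssurf ∧
       ((δ : ℂ)⁻¹, -(δ : ℂ), (δ : ℂ)) ∈ Ssurf ∧
       (((δ : ℂ)⁻¹, (δ : ℂ), (δ : ℂ)) : ℂ × ℂ × ℂ) ≠ ((δ : ℂ)⁻¹, -(δ : ℂ), (δ : ℂ))) ∧
      (herm3 ((((δ : ℂ)⁻¹ - (δ : ℂ) ^ 3 / 2, 0, 3 * (δ : ℂ) / 2) : ℂ × ℂ × ℂ) -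
          ((δ : ℂ)⁻¹, (δ : ℂ), (δ : ℂ))) (1, 0, (δ : ℂ) ^ 2) = 0 ∧
       herm3 ((((δ : ℂ)⁻¹ - (δ : ℂ) ^ 3 / 2, 0, 3 * (δ : ℂ) / 2) : ℂ × ℂ × ℂ) -
          ((δ : ℂ)⁻¹, (δ : ℂ), (δ : ℂ))) (0, 1, 2) = 0) ∧
      (herm3 ((((δ : ℂ)⁻¹ - (δ : ℂ) ^ 3 / 2, 0, 3 * (δ : ℂ) / 2) : ℂ × ℂ × ℂ) -
          ((δ : ℂ)⁻¹, -(δ : ℂ), (δ : ℂ))) (1, 0, (δ : ℂ) ^ 2) = 0 ∧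
       herm3 ((((δ : ℂ)⁻¹ - (δ : ℂ) ^ 3 / 2, 0, 3 * (δ : ℂ) / 2) : ℂ × ℂ × ℂ) -
          ((δ : ℂ)⁻¹, -(δ : ℂ), (δ : ℂ))) (0, 1, -2) = 0) ∧
      (nrm3 ((((δ : ℂ)⁻¹ - (δ : ℂ) ^ 3 / 2, 0, 3 * (δ : ℂ) / 2) : ℂ × ℂ × ℂ) -
          ((δ : ℂ)⁻¹, (δ : ℂ), (δ : ℂ)))
        = nrm3 ((((δ : ℂ)⁻¹ - (δ : ℂ) ^ 3 / 2, 0, 3 * (δ : ℂ) / 2) : ℂ × ℂ × ℂ) -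
          ((δ : ℂ)⁻¹, -(δ : ℂ), (δ : ℂ))) ∧
       nrm3 ((((δ : ℂ)⁻¹ - (δ : ℂ) ^ 3 / 2, 0, 3 * (δ : ℂ) / 2) : ℂ × ℂ × ℂ) -
          ((δ : ℂ)⁻¹, (δ : ℂ), (δ : ℂ))) < 2 * δ) := by
  have hδ : (δ : ℂ) ≠ 0 := by exact_mod_cast h0.ne'
  refine ⟨⟨?_, ?_, ?_⟩, ⟨?_, ?_⟩, ⟨?_, ?_⟩, ?_, ?_⟩
  · show (δ : ℂ) = (δ : ℂ)⁻¹ * (δ : ℂ) ^ 2; field_simp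
  · show (δ : ℂ) = (δ : ℂ)⁻¹ * (-(δ : ℂ)) ^ 2; field_simp
  · intro h
    have h' := congrArg (fun w : ℂ × ℂ × ℂ => w.2.1) h
    simp only at h'
    exact hδ (by linear_combination h' / 2)
  · simp only [herm3, map_pow, Complex.conj_ofReal, map_one, map_zero, map_ofNat]
    simp only [Prod.mk_sub_mk]; ring
  · simp only [herm3, map_pow, Complex.conj_ofReal, map_one, map_zero, map_ofNat]
    simp only [Prod.mk_sub_mk]; ring
  · simp only [herm3, map_pow, Complex.conj_ofReal, map_one, map_zero, map_ofNat]
    simp only [Prod.mk_sub_mk]; ring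
  · simp only [herm3, map_pow, Complex.conj_ofReal, map_one, map_zero, map_ofNat, map_neg]
    simp only [Prod.mk_sub_mk]; ring
  · simp only [nrm3, Prod.mk_sub_mk]
    norm_num
  · have hA : nrm3 ((((δ : ℂ)⁻¹ - (δ : ℂ) ^ 3 / 2, 0, 3 * (δ : ℂ) / 2) : ℂ × ℂ × ℂ) -
          ((δ : ℂ)⁻¹, (δ : ℂ), (δ : ℂ)))
        = Real.sqrt ((δ^3/2)^2 + δ^2 + (δ/2)^2) := by
      simp only [nrm3, Prod.fst, Prod.snd]
      congr 1
      have e1 : ((δ : ℂ)⁻¹ - (δ : ℂ) ^ 3 / 2) - (δ : ℂ)⁻¹ = ((-(δ^3/2) : ℝ) : ℂ) := by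
        push_cast; ring
      have e2 : (0 : ℂ) - (δ : ℂ) = ((-δ : ℝ) : ℂ) := by push_cast; ring
      have e3 : 3 * (δ : ℂ) / 2 - (δ : ℂ) = ((δ/2 : ℝ) : ℂ) := by push_cast; ring
      show ‖((δ : ℂ)⁻¹ - (δ : ℂ) ^ 3 / 2) - (δ : ℂ)⁻¹‖^2 + ‖(0 : ℂ) - (δ : ℂ)‖^2
          + ‖3 * (δ : ℂ) / 2 - (δ : ℂ)‖^2 = _
      rw [e1, e2, e3]
      simp only [Complex.norm_real, Real.norm_eq_abs, sq_abs]; ring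
    rw [hA]
    rw [show (2 * δ) = Real.sqrt ((2*δ)^2) by rw [Real.sqrt_sq (by positivity)]]
    apply Real.sqrt_lt_sqrt (by positivity)
    nlinarith [pow_lt_one₀ (le_of_lt h0) h1 (n := 4) (by norm_num), sq_nonneg δ, sq_nonneg (δ^2)]

/-- The surface `S = {z = xy²}` is not uniformly flat: for each `δ ∈ (0,1)` the points
`p = (1/δ, δ, δ)` and `q = (1/δ, -δ, δ)` of `S` are distinct, and
`w = (1/δ - δ³/2, 0, 3δ/2)` is Hermitian-orthogonal to the tangent spaces of `S` at both
`p` and `q`, with `‖w - p‖ = ‖w - q‖ < 2δ`; consequently the complex normal `ε`-disks of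
distinct points of `S` intersect for every `ε > 0`. -/
theorem statement16 :
    (∀ δ : ℝ, 0 < δ → δ < 1 →
      (((δ : ℂ)⁻¹, (δ : ℂ), (δ : ℂ)) ∈ Ssurf ∧
       ((δ : ℂ)⁻¹, -(δ : ℂ), (δ : ℂ)) ∈ Ssurf ∧
       (((δ : ℂ)⁻¹, (δ : ℂ), (δ : ℂ)) : ℂ × ℂ × ℂ) ≠ ((δ : ℂ)⁻¹, -(δ : ℂ), (δ : ℂ))) ∧
      (herm3 ((((δ : ℂ)⁻¹ - (δ : ℂ) ^ 3 / 2, 0, 3 * (δ : ℂ) / 2) : ℂ × ℂ × ℂ) -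
          ((δ : ℂ)⁻¹, (δ : ℂ), (δ : ℂ))) (1, 0, (δ : ℂ) ^ 2) = 0 ∧
       herm3 ((((δ : ℂ)⁻¹ - (δ : ℂ) ^ 3 / 2, 0, 3 * (δ : ℂ) / 2) : ℂ × ℂ × ℂ) -
          ((δ : ℂ)⁻¹, (δ : ℂ), (δ : ℂ))) (0, 1, 2) = 0) ∧
      (herm3 ((((δ : ℂ)⁻¹ - (δ : ℂ) ^ 3 / 2, 0, 3 * (δ : ℂ) / 2) : ℂ × ℂ × ℂ) -
          ((δ : ℂ)⁻¹, -(δ : ℂ), (δ : ℂ))) (1, 0, (δ : ℂ) ^ 2) = 0 ∧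
       herm3 ((((δ : ℂ)⁻¹ - (δ : ℂ) ^ 3 / 2, 0, 3 * (δ : ℂ) / 2) : ℂ × ℂ × ℂ) -
          ((δ : ℂ)⁻¹, -(δ : ℂ), (δ : ℂ))) (0, 1, -2) = 0) ∧
      (nrm3 ((((δ : ℂ)⁻¹ - (δ : ℂ) ^ 3 / 2, 0, 3 * (δ : ℂ) / 2) : ℂ × ℂ × ℂ) -
          ((δ : ℂ)⁻¹, (δ : ℂ), (δ : ℂ)))
        = nrm3 ((((δ : ℂ)⁻¹ - (δ : ℂ) ^ 3 / 2, 0, 3 * (δ : ℂ) / 2) : ℂ × ℂ × ℂ) -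
          ((δ : ℂ)⁻¹, -(δ : ℂ), (δ : ℂ))) ∧
       nrm3 ((((δ : ℂ)⁻¹ - (δ : ℂ) ^ 3 / 2, 0, 3 * (δ : ℂ) / 2) : ℂ × ℂ × ℂ) -
          ((δ : ℂ)⁻¹, (δ : ℂ), (δ : ℂ))) < 2 * δ)) ∧
    (∀ ε : ℝ, 0 < ε → ∃ s t s' t' : ℂ, ∃ w : ℂ × ℂ × ℂ,
      ((s, t, s * t ^ 2) : ℂ × ℂ × ℂ) ≠ (s', t', s' * t' ^ 2) ∧
      herm3 (w - (s, t, s * t ^ 2)) (1, 0, t ^ 2) = 0 ∧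
      herm3 (w - (s, t, s * t ^ 2)) (0, 1, 2 * s * t) = 0 ∧
      herm3 (w - (s', t', s' * t' ^ 2)) (1, 0, t' ^ 2) = 0 ∧
      herm3 (w - (s', t', s' * t' ^ 2)) (0, 1, 2 * s' * t') = 0 ∧
      nrm3 (w - (s, t, s * t ^ 2)) < ε ∧ nrm3 (w - (s', t', s' * t' ^ 2)) < ε) := by
  constructor
  · exact fun δ h0 h1 => key δ h0 h1
  · intro ε hε
    set δ : ℝ := min (ε/2) (1/2) with hδdef
    have h0 : 0 < δ := lt_min (by linarith) (by norm_num)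
    have h1 : δ < 1 := lt_of_le_of_lt (min_le_right _ _) (by norm_num)
    have h2 : 2 * δ ≤ ε := by
      have := min_le_left (ε/2) (1/2); simp only [hδdef]; linarith
    obtain ⟨⟨_, _, hne⟩, ⟨o1, o2⟩, ⟨o3, o4⟩, heq, hlt⟩ := key δ h0 h1
    have hδ : (δ : ℂ) ≠ 0 := by exact_mod_cast h0.ne'
    refine ⟨(δ : ℂ)⁻¹, (δ : ℂ), (δ : ℂ)⁻¹, -(δ : ℂ),
      ((δ : ℂ)⁻¹ - (δ : ℂ) ^ 3 / 2, 0, 3 * (δ : ℂ) / 2), ?_, ?_, ?_, ?_, ?_, ?_, ?_⟩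
    · have e1 : (δ : ℂ)⁻¹ * (δ : ℂ) ^ 2 = (δ : ℂ) := by field_simp
      have e2 : (δ : ℂ)⁻¹ * (-(δ : ℂ)) ^ 2 = (δ : ℂ) := by field_simp
      rw [e1, e2]; exact hne
    · have e1 : (δ : ℂ)⁻¹ * (δ : ℂ) ^ 2 = (δ : ℂ) := by field_simp
      rw [e1]; exact o1
    · have e1 : (δ : ℂ)⁻¹ * (δ : ℂ) ^ 2 = (δ : ℂ) := by field_simp
      have e2 : (2 : ℂ) * (δ : ℂ)⁻¹ * (δ : ℂ) = 2 := by field_simp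
      rw [e1, e2]; exact o2
    · have e2 : (δ : ℂ)⁻¹ * (-(δ : ℂ)) ^ 2 = (δ : ℂ) := by field_simp
      rw [e2, show ((-(δ:ℂ))^2) = (δ:ℂ)^2 from neg_sq _]; exact o3
    · have e2 : (δ : ℂ)⁻¹ * (-(δ : ℂ)) ^ 2 = (δ : ℂ) := by field_simp
      have e3 : (2 : ℂ) * (δ : ℂ)⁻¹ * (-(δ : ℂ)) = -2 := by field_simp
      rw [e2, e3]; exact o4
    · have e1 : (δ : ℂ)⁻¹ * (δ : ℂ) ^ 2 = (δ : ℂ) := by field_simp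
      rw [e1]; linarith
    · have e2 : (δ : ℂ)⁻¹ * (-(δ : ℂ)) ^ 2 = (δ : ℂ) := by field_simp
      rw [e2, ← heq]; linarith
end

section
/- The curve C₂ = {(x,y) ∈ ℂ² : xy² = 1} is not uniformly flat. Explicitly: for every δ ∈ (0, 1), the points p₊ = (δ⁻², δ) and p₋ = (δ⁻², −δ) lie on C₂, are distinct, and the point w = (δ⁻² − δ⁴/2, 0) ∈ ℂ² satisfies: (i) w − p₊ is orthogonal (with respect to the Hermitian inner product on ℂ²) to the tangent line T_{p₊}C₂ = ℂ·(−2δ⁻³, 1), (ii) w − p₋ is orthogonal to T_{p₋}C₂ = ℂ·(2δ⁻³, 1), and (iii) ‖w − p₊‖ = ‖w − p₋‖ = δ·(1 + δ⁶/4)^{1/2} < 2δ. Consequently, for every ε > 0 there exist distinct points of C₂ whose complex normal disks of radius ε intersect, so the ε-neighborhood of C₂ is not a tubular neighborhood for any ε > 0. -/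
/-!
The reflection `(x, y) ↦ (x, -y)` preserves `C₂` and fixes the `x`-axis. The complex normal line
of `C₂` at `(δ⁻², δ)` (with `δ` real) meets the `x`-axis in `w = (δ⁻² - δ⁴/2, 0)`, so by symmetry
the normal line at `(δ⁻², -δ)` passes through the same point. Both points are at distance
`δ (1 + δ⁶/4)^{1/2} < 2δ` from `w`, which tends to `0` with `δ`: the two branches `y ≈ ±x^{-1/2}`
of `C₂` approach each other at infinity, so no normal disks of a fixed radius are disjoint.
-/

open ComplexConjugate

/-- The Hermitian inner product on `ℂ²`. -/
def herm2 (u v : ℂ × ℂ) : ℂ := u.1 * conj v.1 + u.2 * conj v.2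

/-- The Euclidean norm on `ℂ²`. -/
noncomputable def nrm2 (u : ℂ × ℂ) : ℝ := Real.sqrt (‖u.1‖ ^ 2 + ‖u.2‖ ^ 2)

/-- The curve `C₂ = {xy² = 1} ⊆ ℂ²`. -/
def C2curve : Set (ℂ × ℂ) := {v | v.1 * v.2 ^ 2 = 1}

namespace C2curve

noncomputable section

def point (t : ℂ) : ℂ × ℂ := ((t ^ 2)⁻¹, t)

def tangent (t : ℂ) : ℂ × ℂ := (-2 * (t ^ 3)⁻¹, 1)

/-- For real `t`, the point where the complex normal line of `C₂` at `point t` meets the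
`x`-axis. -/
def normalFoot (t : ℂ) : ℂ × ℂ := ((t ^ 2)⁻¹ - t ^ 4 / 2, 0)

theorem point_mem {t : ℂ} (ht : t ≠ 0) : point t ∈ C2curve :=
  inv_mul_cancel₀ (pow_ne_zero 2 ht)

theorem point_injective : Function.Injective point :=
  fun _ _ h => congrArg Prod.snd h

theorem point_ne_point_neg {t : ℂ} (ht : t ≠ 0) : point t ≠ point (-t) :=
  point_injective.ne (mt CharZero.eq_neg_self_iff.1 ht)

theorem point_neg (t : ℂ) : point (-t) = ((t ^ 2)⁻¹, -t) := by
  simp only [point, neg_sq]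

theorem tangent_neg (t : ℂ) : tangent (-t) = (2 * (t ^ 3)⁻¹, 1) := by
  simp only [tangent, Odd.neg_pow (by decide : Odd 3), inv_neg, mul_neg, neg_mul, neg_neg]

theorem normalFoot_neg (t : ℂ) : normalFoot (-t) = normalFoot t := by
  simp only [normalFoot, neg_sq, Even.neg_pow (by decide : Even 4)]

theorem herm2_normalFoot_sub_point_tangent {t : ℂ} (ht : conj t = t) :
    herm2 (normalFoot t - point t) (tangent t) = 0 := by
  rcases eq_or_ne t 0 with rfl | ht0
  · simp [herm2, normalFoot, point]
  · simp only [herm2, normalFoot, point, tangent, Prod.fst_sub, Prod.snd_sub, map_mul,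
      map_inv₀, map_pow, map_neg, map_ofNat, map_one, ht]
    field_simp
    ring

theorem nrm2_normalFoot_sub_point (t : ℂ) :
    nrm2 (normalFoot t - point t) = ‖t‖ * √(1 + ‖t‖ ^ 6 / 4) := by
  have hfst : (normalFoot t - point t).1 = -(t ^ 4 / 2) := by
    simp only [normalFoot, point, Prod.fst_sub]
    ring
  have hsnd : (normalFoot t - point t).2 = -t := by
    simp only [normalFoot, point, Prod.snd_sub, zero_sub]
  rw [nrm2, hfst, hsnd, norm_neg, norm_neg, norm_div, norm_pow, Complex.norm_ofNat,
    ← Real.sqrt_sq (norm_nonneg t), ← Real.sqrt_mul (sq_nonneg _), Real.sqrt_sq (norm_nonneg t)]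
  ring_nf

theorem nrm2_normalFoot_sub_point_neg (t : ℂ) :
    nrm2 (normalFoot t - point (-t)) = nrm2 (normalFoot t - point t) := by
  rw [← normalFoot_neg, nrm2_normalFoot_sub_point, normalFoot_neg, nrm2_normalFoot_sub_point,
    norm_neg]

theorem nrm2_normalFoot_sub_point_ofReal {δ : ℝ} (hδ : 0 ≤ δ) :
    nrm2 (normalFoot δ - point δ) = δ * √(1 + δ ^ 6 / 4) := by
  rw [nrm2_normalFoot_sub_point, Complex.norm_real, Real.norm_of_nonneg hδ]

theorem herm2_normalFoot_sub_point_neg_tangent_neg (δ : ℝ) :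
    herm2 (normalFoot δ - point (-δ)) (tangent (-δ)) = 0 := by
  rw [← normalFoot_neg]
  exact herm2_normalFoot_sub_point_tangent (by rw [map_neg, Complex.conj_ofReal])

end

end C2curve

theorem mul_sqrt_one_add_pow_six_div_four_lt {r : ℝ} (h0 : 0 < r) (h1 : r < 1) :
    r * √(1 + r ^ 6 / 4) < 2 * r := by
  have hsqrt : √(1 + r ^ 6 / 4) < 2 := by
    rw [Real.sqrt_lt' two_pos]
    nlinarith [pow_lt_one₀ h0.le h1 (by norm_num : 6 ≠ 0)]
  nlinarith

open C2curve in
/-- The curve `C₂ = {xy² = 1}` is not uniformly flat: for each `δ ∈ (0,1)` the points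
`p₊ = (δ⁻², δ)` and `p₋ = (δ⁻², -δ)` of `C₂` are distinct, and `w = (δ⁻² - δ⁴/2, 0)` is
Hermitian-orthogonal to the tangent lines of `C₂` at both points, with
`‖w - p₊‖ = ‖w - p₋‖ = δ(1 + δ⁶/4)^{1/2} < 2δ`; consequently the complex normal `ε`-disks
of distinct points of `C₂` intersect for every `ε > 0`. -/
theorem statement17 :
    (∀ δ : ℝ, 0 < δ → δ < 1 →
      ((((δ : ℂ) ^ 2)⁻¹, (δ : ℂ)) ∈ C2curve ∧
       (((δ : ℂ) ^ 2)⁻¹, -(δ : ℂ)) ∈ C2curve ∧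
       (((((δ : ℂ) ^ 2)⁻¹, (δ : ℂ))) : ℂ × ℂ) ≠ (((δ : ℂ) ^ 2)⁻¹, -(δ : ℂ))) ∧
      herm2 (((((δ : ℂ) ^ 2)⁻¹ - (δ : ℂ) ^ 4 / 2, 0) : ℂ × ℂ) -
          ((((δ : ℂ) ^ 2)⁻¹, (δ : ℂ)))) (-2 * ((δ : ℂ) ^ 3)⁻¹, 1) = 0 ∧
      herm2 (((((δ : ℂ) ^ 2)⁻¹ - (δ : ℂ) ^ 4 / 2, 0) : ℂ × ℂ) -
          ((((δ : ℂ) ^ 2)⁻¹, -(δ : ℂ)))) (2 * ((δ : ℂ) ^ 3)⁻¹, 1) = 0 ∧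
      (nrm2 (((((δ : ℂ) ^ 2)⁻¹ - (δ : ℂ) ^ 4 / 2, 0) : ℂ × ℂ) -
          ((((δ : ℂ) ^ 2)⁻¹, (δ : ℂ))))
        = nrm2 (((((δ : ℂ) ^ 2)⁻¹ - (δ : ℂ) ^ 4 / 2, 0) : ℂ × ℂ) -
          ((((δ : ℂ) ^ 2)⁻¹, -(δ : ℂ)))) ∧
       nrm2 (((((δ : ℂ) ^ 2)⁻¹ - (δ : ℂ) ^ 4 / 2, 0) : ℂ × ℂ) -
          ((((δ : ℂ) ^ 2)⁻¹, (δ : ℂ))))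
        = δ * Real.sqrt (1 + δ ^ 6 / 4) ∧
       δ * Real.sqrt (1 + δ ^ 6 / 4) < 2 * δ)) ∧
    (∀ ε : ℝ, 0 < ε → ∃ t t' : ℂ, ∃ w : ℂ × ℂ, t ≠ 0 ∧ t' ≠ 0 ∧
      ((((t ^ 2)⁻¹, t)) : ℂ × ℂ) ≠ ((t' ^ 2)⁻¹, t') ∧
      herm2 (w - ((t ^ 2)⁻¹, t)) (-2 * (t ^ 3)⁻¹, 1) = 0 ∧
      herm2 (w - ((t' ^ 2)⁻¹, t')) (-2 * (t' ^ 3)⁻¹, 1) = 0 ∧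
      nrm2 (w - ((t ^ 2)⁻¹, t)) < ε ∧ nrm2 (w - ((t' ^ 2)⁻¹, t')) < ε) := by
  refine ⟨fun δ h0 h1 => ?_, fun ε hε => ?_⟩
  · have hδ : (δ : ℂ) ≠ 0 := Complex.ofReal_ne_zero.2 h0.ne'
    rw [← point_neg, ← tangent_neg]
    exact ⟨⟨point_mem hδ, point_mem (neg_ne_zero.2 hδ), point_ne_point_neg hδ⟩,
      herm2_normalFoot_sub_point_tangent (Complex.conj_ofReal δ),
      herm2_normalFoot_sub_point_neg_tangent_neg δ, (nrm2_normalFoot_sub_point_neg δ).symm,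
      nrm2_normalFoot_sub_point_ofReal h0.le, mul_sqrt_one_add_pow_six_div_four_lt h0 h1⟩
  · set δ : ℝ := min (ε / 2) (1 / 2)
    have h0 : 0 < δ := lt_min (half_pos hε) one_half_pos
    have h1 : δ < 1 := (min_le_right _ _).trans_lt one_half_lt_one
    have h2 : 2 * δ ≤ ε := by linarith [min_le_left (ε / 2) (1 / 2)]
    have hdist : nrm2 (normalFoot δ - point δ) < ε :=
      (nrm2_normalFoot_sub_point_ofReal h0.le).trans_lt
        ((mul_sqrt_one_add_pow_six_div_four_lt h0 h1).trans_le h2)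
    have hδ : (δ : ℂ) ≠ 0 := Complex.ofReal_ne_zero.2 h0.ne'
    exact ⟨δ, -δ, normalFoot δ, hδ, neg_ne_zero.2 hδ, point_ne_point_neg hδ,
      herm2_normalFoot_sub_point_tangent (Complex.conj_ofReal δ),
      herm2_normalFoot_sub_point_neg_tangent_neg δ, hdist,
      (nrm2_normalFoot_sub_point_neg δ).trans_lt hdist⟩
end
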